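/- Let f₁ : M → N₁ be a pure embedding of R-modules and f₂ : M → N₂ an R-homomorphism. Then the submodule D = {(f₁(m), −f₂(m)) : m ∈ M} is a pure submodule of N₁ ⊕ N₂. -/
import Mathlib


universe u

/-- `A` is a pure submodule of its ambient module: every finite system of
`R`-linear equations `∑ j, r i j • x j = a i` with constants `a i ∈ A` that has
a solution in the ambient module has a solution in `A`. -/
def IsPureSubmodule {R : Type*} [Ring R] {M : Type*} [AddCommGroup M] [Module R M]
    (A : Submodule R M) : Prop :=
  ∀ (m n : ℕ) (r : Fin m → Fin n → R) (a : Fin m → M),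
    (∀ i, a i ∈ A) →
    (∃ x : Fin n → M, ∀ i, (∑ j, r i j • x j) = a i) →
    ∃ x : Fin n → M, (∀ j, x j ∈ A) ∧ ∀ i, (∑ j, r i j • x j) = a i

/-- A pure embedding is an injective linear map whose image is a pure submodule
of its codomain. -/
def IsPureEmbedding {R : Type*} [Ring R] {M N : Type*} [AddCommGroup M] [Module R M]
    [AddCommGroup N] [Module R N] (f : M →ₗ[R] N) : Prop :=
  Function.Injective f ∧ IsPureSubmodule (LinearMap.range f)

theorem stmt4 {R M N₁ N₂ : Type u} [Ring R] [AddCommGroup M] [Module R M]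
    [AddCommGroup N₁] [Module R N₁] [AddCommGroup N₂] [Module R N₂]
    (f₁ : M →ₗ[R] N₁) (f₂ : M →ₗ[R] N₂) (hf₁ : IsPureEmbedding f₁) :
    -- `D = {(f₁ m, -f₂ m) : m ∈ M}`, the range of `f₁.prod (-f₂)`, is a pure
    -- submodule of `N₁ ⊕ N₂`
    IsPureSubmodule (LinearMap.range (f₁.prod (-f₂))) := by
  obtain ⟨hinj, hpure⟩ := hf₁
  intro m n r a ha hx
  obtain ⟨x, hx⟩ := hx
  choose g hg using ha
  have h1 : ∀ i, (∑ j, r i j • (x j).1) = f₁ (g i) := by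
    intro i
    have := congrArg Prod.fst (hx i)
    simpa [← hg i, Prod.fst_sum] using this
  obtain ⟨y, hyA, hy⟩ := hpure m n r (fun i => f₁ (g i))
    (fun i => LinearMap.mem_range_self _ _) ⟨fun j => (x j).1, h1⟩
  choose u hu using hyA
  refine ⟨fun j => (f₁.prod (-f₂)) (u j), fun j => LinearMap.mem_range_self _ _, fun i => ?_⟩
  have key : (∑ j, r i j • u j) = g i := by
    apply hinj
    simp only [map_sum, map_smul]
    simpa [hu] using hy i
  rw [← hg i, ← key]
  simp [map_sum, map_smul]
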